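/- Let G be a nontrivial finite group and let P and Q be subsets of G, neither of which generates G. If the intersection of all maximal subgroups of G containing P equals the intersection of all maximal subgroups of G containing Q, then δ(P) = δ(Q). -/

import Mathlib

/-- An *intersection subgroup* of `G`: an intersection of a nonempty
collection of maximal subgroups of `G`. -/
def IsIntersectionSubgroup {G : Type*} [Group G] (I : Subgroup G) : Prop :=
  ∃ 𝒩 : Set (Subgroup G), 𝒩.Nonempty ∧ (∀ M ∈ 𝒩, IsCoatom M) ∧ I = sInf 𝒩

/-- `⌈P⌉`: the intersection of all maximal subgroups of `G` containing `P`
(the smallest intersection subgroup containing a non-generating set `P`). -/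
def interCeil {G : Type*} [Group G] (P : Set G) : Subgroup G :=
  sInf {M : Subgroup G | IsCoatom M ∧ P ⊆ (M : Set G)}

/-- The *deficiency* `δ(P)` of a subset `P ⊆ G`: the minimum size of a
finite subset `Q ⊆ G` with `⟨P ∪ Q⟩ = G`. -/
noncomputable def deficiency {G : Type*} [Group G] (P : Set G) : ℕ :=
  sInf {n : ℕ | ∃ Q : Finset G, Q.card = n ∧ Subgroup.closure (P ∪ ↑Q) = ⊤}

/-- `d(G)`: the minimum size of a generating set of `G`. -/
noncomputable def minGen (G : Type*) [Group G] : ℕ :=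
  sInf {n : ℕ | ∃ S : Finset G, S.card = n ∧ Subgroup.closure (S : Set G) = ⊤}

open Classical in
/-- The nim-number of a position `P` in the achievement game `GEN(G)`:
positions generating `G` are terminal (they have no options, so their
nim-number is `mex ∅ = 0`); the options of a non-generating position `P`
are the positions `P ∪ {g}` for `g ∈ G \ P`, and
`nim(P) = mex {nim(P ∪ {g}) | g ∈ G \ P}` is the least natural number
that is not the nim-number of an option of `P`. -/
noncomputable def gameNim {G : Type*} [Group G] [Fintype G] (P : Set G) : ℕ :=
  if Subgroup.closure P = ⊤ then 0
  else sInf {n : ℕ | ∀ g ∉ P, n ≠ gameNim (insert g P)}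
termination_by Fintype.card G - P.ncard
decreasing_by
  have h1 : (insert g P).ncard = P.ncard + 1 :=
    Set.ncard_insert_of_notMem ‹g ∉ P› (Set.toFinite P)
  have h2 : (insert g P).ncard ≤ Fintype.card G := by
    have := Set.ncard_le_ncard (Set.subset_univ (insert g P)) (Set.toFinite _)
    simpa [Set.ncard_univ, Nat.card_eq_fintype_card] using this
  omega

lemma subset_interCeil {G : Type*} [Group G] (P : Set G) : P ⊆ (interCeil P : Set G) := by
  intro x hx
  exact Subgroup.mem_sInf.2 fun M hM => hM.2 hx

lemma subset_coatom_iff {G : Type*} [Group G] (P : Set G) (M : Subgroup G) (hM : IsCoatom M) :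
    P ⊆ (M : Set G) ↔ interCeil P ≤ M :=
  ⟨fun h => sInf_le ⟨hM, h⟩, fun h => (subset_interCeil P).trans h⟩

lemma closure_ne_top_iff {G : Type*} [Group G] [Fintype G] (S : Set G) :
    Subgroup.closure S ≠ ⊤ ↔ ∃ M : Subgroup G, IsCoatom M ∧ S ⊆ (M : Set G) := by
  constructor
  · intro h
    rcases (eq_top_or_exists_le_coatom (Subgroup.closure S)).resolve_left h with ⟨M, hM, hle⟩
    exact ⟨M, hM, Subgroup.subset_closure.trans hle⟩
  · rintro ⟨M, hM, hSM⟩ htop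
    have hle : Subgroup.closure S ≤ M := (Subgroup.closure_le M).2 hSM
    rw [htop] at hle
    exact hM.1 (top_le_iff.mp hle)

/-- If `P` and `Q` are non-generating subsets of a nontrivial finite group `G`
such that the intersection of all maximal subgroups containing `P` equals the
intersection of all maximal subgroups containing `Q`, then `δ(P) = δ(Q)`. -/
theorem deficiency_eq_of_interCeil_eq (G : Type*) [Group G] [Fintype G] [Nontrivial G]
    (P Q : Set G) (hP : Subgroup.closure P ≠ ⊤) (hQ : Subgroup.closure Q ≠ ⊤)
    (h : interCeil P = interCeil Q) :
    deficiency P = deficiency Q := by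
  have key : ∀ R : Set G, Subgroup.closure (P ∪ R) = ⊤ ↔ Subgroup.closure (Q ∪ R) = ⊤ := by
    intro R
    rw [← not_iff_not, ← Ne, ← Ne, closure_ne_top_iff, closure_ne_top_iff]
    constructor
    · rintro ⟨M, hM, hsub⟩
      refine ⟨M, hM, Set.union_subset ?_ ((Set.union_subset_iff.1 hsub).2)⟩
      rw [subset_coatom_iff _ _ hM, ← h, ← subset_coatom_iff _ _ hM]
      exact (Set.union_subset_iff.1 hsub).1
    · rintro ⟨M, hM, hsub⟩
      refine ⟨M, hM, Set.union_subset ?_ ((Set.union_subset_iff.1 hsub).2)⟩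
      rw [subset_coatom_iff _ _ hM, h, ← subset_coatom_iff _ _ hM]
      exact (Set.union_subset_iff.1 hsub).1
  unfold deficiency
  congr 1
  ext n
  simp only [Set.mem_setOf_eq]
  exact ⟨fun ⟨R, hc, ht⟩ => ⟨R, hc, (key R).1 ht⟩, fun ⟨R, hc, ht⟩ => ⟨R, hc, (key R).2 ht⟩⟩
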